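/- Let a₀ ≥ a₁ ≥ a₂ ≥ a₃ ≥ a₄ be real numbers with a₀ + a₁ + a₂ + a₃ + a₄ = 0. Suppose for two exponent vectors (i₀,…,i₄), (j₀,…,j₄) of nonnegative integers summing to 5 we have ∑ aₖiₖ ≥ ∑ aₖjₖ for EVERY such choice of (a₀,…,a₄). Then the partial-sum inequalities hold: i₀ ≥ j₀, i₀+i₁ ≥ j₀+j₁, i₀+i₁+i₂ ≥ j₀+j₁+j₂, i₀+i₁+i₂+i₃ ≥ j₀+j₁+j₂+j₃. -/

import Mathlib

/-!
Test the hypothesis against the step weights `a = n · 1_{k < m} − m` (here `n = 5`), which are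
antitone with total zero. Pairing such a weight with an exponent vector gives `n` times its `m`-th
partial sum minus `m` times its total, and the totals of the two vectors agree, so the weight
inequality is exactly the `m`-th partial-sum inequality.
-/

open Finset

section Domination

variable {n : ℕ}

noncomputable def stepWeight (n m : ℕ) (k : Fin n) : ℝ :=
  (if (k : ℕ) < m then (n : ℝ) else 0) - #{k : Fin n | (k : ℕ) < m}

lemma stepWeight_antitone (m : ℕ) : Antitone (stepWeight n m) := by
  intro k l hkl
  have hkl' : (k : ℕ) ≤ l := hkl
  unfold stepWeight
  gcongr
  split_ifs with hl hk
  exacts [le_rfl, absurd (hkl'.trans_lt hl) hk, Nat.cast_nonneg n, le_rfl]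

lemma sum_stepWeight (m : ℕ) : ∑ k, stepWeight n m k = 0 := by
  simp only [stepWeight, sum_sub_distrib, ← sum_filter, sum_const, card_univ, Fintype.card_fin,
    nsmul_eq_mul]
  ring

lemma sum_stepWeight_mul (m : ℕ) (x : Fin n → ℝ) :
    ∑ k, stepWeight n m k * x k =
      n * ∑ k : Fin n with k.val < m, x k - #{k : Fin n | (k : ℕ) < m} * ∑ k, x k := by
  simp only [stepWeight, sub_mul, ite_mul, zero_mul, sum_sub_distrib, ← sum_filter, ← mul_sum]

theorem sum_filter_lt_le_of_forall_antitone {x y : Fin n → ℝ} (hsum : ∑ k, x k = ∑ k, y k)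
    (h : ∀ a : Fin n → ℝ, Antitone a → ∑ k, a k = 0 → ∑ k, a k * y k ≤ ∑ k, a k * x k)
    (m : ℕ) : ∑ k : Fin n with k.val < m, y k ≤ ∑ k : Fin n with k.val < m, x k := by
  rcases Nat.eq_zero_or_pos n with rfl | hn
  · simp
  have key := h _ (stepWeight_antitone m) (sum_stepWeight m)
  rw [sum_stepWeight_mul, sum_stepWeight_mul, hsum] at key
  have hn' : (0 : ℝ) < n := by exact_mod_cast hn
  nlinarith

end Domination

theorem stmt_1 (i0 i1 i2 i3 i4 j0 j1 j2 j3 j4 : ℕ)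
    (hi : i0 + i1 + i2 + i3 + i4 = 5)
    (hj : j0 + j1 + j2 + j3 + j4 = 5)
    (h : ∀ a0 a1 a2 a3 a4 : ℝ,
      a0 ≥ a1 → a1 ≥ a2 → a2 ≥ a3 → a3 ≥ a4 →
      a0 + a1 + a2 + a3 + a4 = 0 →
      a0 * i0 + a1 * i1 + a2 * i2 + a3 * i3 + a4 * i4 ≥
        a0 * j0 + a1 * j1 + a2 * j2 + a3 * j3 + a4 * j4) :
    i0 ≥ j0 ∧ i0 + i1 ≥ j0 + j1 ∧ i0 + i1 + i2 ≥ j0 + j1 + j2 ∧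
      i0 + i1 + i2 + i3 ≥ j0 + j1 + j2 + j3 := by
  set x : Fin 5 → ℝ := ![i0, i1, i2, i3, i4]
  set y : Fin 5 → ℝ := ![j0, j1, j2, j3, j4]
  have hsum : ∑ k, x k = ∑ k, y k := by
    simp only [Fin.sum_univ_five, Matrix.cons_val_zero, Matrix.cons_val_one, Matrix.cons_val, x, y]
    exact_mod_cast hi.trans hj.symm
  have hdom : ∀ a : Fin 5 → ℝ, Antitone a → ∑ k, a k = 0 →
      ∑ k, a k * y k ≤ ∑ k, a k * x k := fun a ha ha0 => by
    simp only [Fin.sum_univ_five, Matrix.cons_val_zero, Matrix.cons_val_one, Matrix.cons_val, x,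
      y] at ha0 ⊢
    exact h _ _ _ _ _ (ha (by decide)) (ha (by decide)) (ha (by decide)) (ha (by decide)) ha0
  have partial_le := sum_filter_lt_le_of_forall_antitone hsum hdom
  have h1 : j0 ≤ i0 := by simpa [sum_filter, Fin.sum_univ_five, x, y] using partial_le 1
  have h2 : (j0 + j1 : ℝ) ≤ i0 + i1 := by
    simpa [sum_filter, Fin.sum_univ_five, x, y] using partial_le 2
  have h3 : (j0 + j1 + j2 : ℝ) ≤ i0 + i1 + i2 := by
    simpa [sum_filter, Fin.sum_univ_five, x, y] using partial_le 3
  have h4 : (j0 + j1 + j2 + j3 : ℝ) ≤ i0 + i1 + i2 + i3 := by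
    simpa [sum_filter, Fin.sum_univ_five, x, y] using partial_le 4
  exact ⟨h1, by exact_mod_cast h2, by exact_mod_cast h3, by exact_mod_cast h4⟩
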